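/- Let f : ℝ^d → {1,…,c} be a base classifier, let Γ = {b_1,…,b_k} be a set of k distinct labels, and let p̄_{b_1} ≤ … ≤ p̄_{b_k} be reals with Pr(f(X) = b_j) ≤ p̄_{b_j} for every j. For t = 1,…,k set p̄_{S_t} = Σ_{j=1}^t p̄_{b_j} and assume 0 < p̄_{S_t} < 1. Then for every δ ∈ ℝ^d with δ ≠ 0, min_{i∈Γ} Pr(f(Y) = i) ≤ min_{1≤t≤k} Φ(Φ⁻¹(p̄_{S_t}) + ‖δ‖₂/σ)/t. -/

import Mathlib

open MeasureTheory ProbabilityTheory Real Filter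

/-- The standard normal cumulative distribution function Φ. -/
noncomputable def Phi (t : ℝ) : ℝ := (gaussianReal 0 1 (Set.Iic t)).toReal

/-- The inverse Φ⁻¹ of the standard normal CDF (meaningful on (0,1)). -/
noncomputable def PhiInv : ℝ → ℝ := Function.invFun Phi

/-- The Gaussian measure N(m, σ²I) on ℝ^d. -/
noncomputable def gaussianVec {d : ℕ} (m : Fin d → ℝ) (σ : ℝ) :
    Measure (Fin d → ℝ) :=
  Measure.pi fun i => gaussianReal (m i) (Real.toNNReal (σ ^ 2))

/-- Dot product on ℝ^d. -/
def dotp {d : ℕ} (a b : Fin d → ℝ) : ℝ := ∑ i, a i * b i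

/-- Euclidean (ℓ₂) norm on ℝ^d. -/
noncomputable def l2norm {d : ℕ} (a : Fin d → ℝ) : ℝ := Real.sqrt (∑ i, a i ^ 2)

open Set
open scoped NNReal ENNReal

/-!
Fix `t` and let `A` be the set where `f` takes one of the labels `b 0, …, b t`; then
`Pr(X ∈ A) ≤ p̄_{S_t}` while `Pr(Y ∈ A)` is at least `t + 1` times the smallest label
probability. The likelihood ratio of `N(x + δ, σ²I)` against `N(x, σ²I)` is an increasing
function of `dotp δ z`, so by the Neyman–Pearson lemma no set of `X`-probability at most `p` has
larger `Y`-probability than the half-space `{z | τ ≤ dotp δ z}` of `X`-probability exactly `p`.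
Projecting onto `δ` turns both probabilities of that half-space into one-dimensional Gaussian
tails, which gives `Φ(Φ⁻¹(p) + ‖δ‖/σ)`.
-/

lemma continuous_cdf (μ : Measure ℝ) [IsProbabilityMeasure μ] [NullSingletonClass μ] :
    Continuous (cdf μ) := by
  refine continuous_iff_continuousAt.2 fun a ↦ continuousAt_iff_continuous_left_right.2
    ⟨continuousWithinAt_Iio_iff_Iic.1 ?_, (cdf μ).right_continuous a⟩
  have hatom := (cdf μ).measure_singleton a
  rw [measure_cdf, measure_singleton, eq_comm, ENNReal.ofReal_eq_zero, sub_nonpos] at hatom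
  exact (monotone_cdf μ).continuousWithinAt_Iio_iff_leftLim_eq.2
    (le_antisymm (Monotone.leftLim_le (monotone_cdf μ) le_rfl) hatom)

lemma Phi_eq_cdf : Phi = cdf (gaussianReal 0 1) := by
  ext t
  rw [Phi, cdf_eq_real, measureReal_def]

lemma exists_cdf_eq (μ : Measure ℝ) [IsProbabilityMeasure μ] [NullSingletonClass μ] {p : ℝ}
    (hp : p ∈ Ioo 0 1) : ∃ t, cdf μ t = p := by
  obtain ⟨a, ha⟩ := ((tendsto_cdf_atBot μ).eventually_lt_const hp.1).exists
  obtain ⟨b, hb⟩ := ((tendsto_cdf_atTop μ).eventually_const_lt hp.2).exists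
  have hab : a ≤ b := ((monotone_cdf μ).reflect_lt (ha.trans hb)).le
  obtain ⟨t, -, ht⟩ :=
    intermediate_value_Icc hab (continuous_cdf μ).continuousOn ⟨ha.le, hb.le⟩
  exact ⟨t, ht⟩

lemma Phi_PhiInv {p : ℝ} (hp : p ∈ Ioo 0 1) : Phi (PhiInv p) = p := by
  have := nullSingletonClass_gaussianReal (μ := 0) one_ne_zero
  exact Function.invFun_eq (Phi_eq_cdf ▸ exists_cdf_eq _ hp)

lemma gaussianReal_Ici (m : ℝ) {s : ℝ} (hs : 0 < s) (τ : ℝ) :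
    gaussianReal m (s ^ 2).toNNReal (Ici τ) = ENNReal.ofReal (Phi ((m - τ) / s)) := by
  have hmap :
      (gaussianReal 0 1).map (fun y ↦ m + (-s) * y) = gaussianReal m (s ^ 2).toNNReal := by
    rw [show (fun y ↦ m + (-s) * y) = (m + ·) ∘ ((-s) * ·) from rfl,
      ← Measure.map_map (by fun_prop) (by fun_prop), gaussianReal_map_const_mul,
      gaussianReal_map_const_add]
    congr 1
    · ring
    · ext; simp [sq_nonneg]
  have hpre : (fun y ↦ m + (-s) * y) ⁻¹' Ici τ = Iic ((m - τ) / s) := by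
    ext y
    simp only [mem_preimage, mem_Ici, mem_Iic, le_div_iff₀ hs]
    constructor <;> intro h <;> linarith
  rw [← hmap, Measure.map_apply (by fun_prop) measurableSet_Ici, hpre, Phi,
    ENNReal.ofReal_toReal (measure_ne_top _ _)]

theorem lintegral_fin_nat_prod_eq_prod {n : ℕ} {α : Type*} [MeasurableSpace α]
    {μ : Fin n → Measure α} [∀ i, SigmaFinite (μ i)]
    {f : Fin n → α → ℝ≥0∞} (hf : ∀ i, Measurable (f i)) :
    ∫⁻ x : Fin n → α, ∏ i, f i (x i) ∂Measure.pi μ = ∏ i, ∫⁻ x, f i x ∂μ i := by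
  induction n with
  | zero => simp
  | succ n ih =>
      calc
        _ = ∫⁻ x : α × (Fin n → α), f 0 x.1 * ∏ i : Fin n, f i.succ (x.2 i)
            ∂((μ 0).prod (Measure.pi fun i ↦ μ i.succ)) := by
          rw [← ((measurePreserving_piFinSuccAbove μ 0).symm).lintegral_comp_emb
            (MeasurableEquiv.measurableEmbedding _)]
          simp_rw [MeasurableEquiv.piFinSuccAbove_symm_apply, Fin.insertNthEquiv,
            Fin.prod_univ_succ, Fin.insertNth_zero, Equiv.coe_fn_mk, Fin.cons_succ,
            Fin.zero_succAbove, cast_eq, Fin.cons_zero]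
        _ = (∫⁻ x, f 0 x ∂μ 0) * ∏ i : Fin n, ∫⁻ x, f i.succ x ∂(μ i.succ) := by
          rw [← ih fun i ↦ hf _, ← lintegral_prod_mul (hf 0).aemeasurable
            (g := fun y : Fin n → α ↦ ∏ i, f i.succ (y i))
            (Finset.measurable_prod _ fun i _ ↦ (hf _).comp (measurable_pi_apply i)).aemeasurable]
        _ = ∏ i, ∫⁻ x, f i x ∂(μ i) := by rw [Fin.prod_univ_succ]

theorem lintegral_fintype_prod_eq_prod {ι : Type*} [Fintype ι] {α : Type*} [MeasurableSpace α]
    {μ : ι → Measure α} [∀ i, SigmaFinite (μ i)]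
    {f : ι → α → ℝ≥0∞} (hf : ∀ i, Measurable (f i)) :
    ∫⁻ x : ι → α, ∏ i, f i (x i) ∂Measure.pi μ = ∏ i, ∫⁻ x, f i x ∂μ i := by
  let e := (Fintype.equivFin ι).symm
  rw [← (measurePreserving_piCongrLeft _ e).lintegral_comp_emb
    (MeasurableEquiv.measurableEmbedding _)]
  simp_rw [← e.prod_comp, MeasurableEquiv.coe_piCongrLeft, Equiv.piCongrLeft_apply_apply]
  exact lintegral_fin_nat_prod_eq_prod fun i ↦ hf _

theorem MeasureTheory.Measure.pi_withDensity {ι : Type*} [Fintype ι] {α : Type*}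
    [MeasurableSpace α] (μ : ι → Measure α) [∀ i, SigmaFinite (μ i)]
    {f : ι → α → ℝ≥0∞} (hf : ∀ i, Measurable (f i))
    [∀ i, SigmaFinite ((μ i).withDensity (f i))] :
    Measure.pi (fun i ↦ (μ i).withDensity (f i))
      = (Measure.pi μ).withDensity (fun x ↦ ∏ i, f i (x i)) := by
  refine Measure.pi_eq fun s hs ↦ ?_
  rw [withDensity_apply _ (.univ_pi hs), Measure.restrict_pi_pi,
    lintegral_fintype_prod_eq_prod hf]
  exact Finset.prod_congr rfl fun i _ ↦ (withDensity_apply _ (hs i)).symm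

lemma map_pi_gaussianReal_sum_mul {ι : Type*} [Fintype ι] (m : ι → ℝ) (v : ι → ℝ≥0)
    (w : ι → ℝ) :
    (Measure.pi fun i ↦ gaussianReal (m i) (v i)).map (fun z ↦ ∑ i, w i * z i)
      = gaussianReal (∑ i, w i * m i) (∑ i, (w i ^ 2).toNNReal * v i) := by
  refine Measure.ext_of_charFun (funext fun t ↦ ?_)
  have hcoord (i : ι) (y : ℝ) : Complex.exp (t * (w i * y : ℝ) * Complex.I)
      = Complex.exp ((t * w i : ℝ) * y * Complex.I) := by push_cast; ring_nf
  have hmeas : Measurable fun z : ι → ℝ ↦ ∑ i, w i * z i := by fun_prop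
  rw [charFun_apply_real, integral_map hmeas.aemeasurable (by fun_prop)]
  simp_rw [Complex.ofReal_sum, Finset.mul_sum, Finset.sum_mul, Complex.exp_sum, hcoord]
  rw [integral_fintype_prod_eq_prod
    (f := fun i (y : ℝ) ↦ Complex.exp ((t * w i : ℝ) * y * Complex.I))]
  simp_rw [← charFun_apply_real, charFun_gaussianReal, ← Complex.exp_sum]
  push_cast
  simp_rw [Real.coe_toNNReal _ (sq_nonneg _), Finset.sum_sub_distrib, Finset.mul_sum,
    Finset.sum_mul, Finset.sum_div]
  push_cast
  congr 2 <;> refine Finset.sum_congr rfl fun i _ ↦ by ring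

lemma gaussianReal_add_eq_withDensity (m c : ℝ) {v : ℝ≥0} (hv : v ≠ 0) :
    gaussianReal (m + c) v = (gaussianReal m v).withDensity
      fun y ↦ ENNReal.ofReal (Real.exp ((c * (y - m) - c ^ 2 / 2) / v)) := by
  rw [gaussianReal_of_var_ne_zero _ hv, gaussianReal_of_var_ne_zero _ hv,
    ← withDensity_mul _ (measurable_gaussianPDF _ _) (by fun_prop)]
  congr 1
  ext y
  rw [Pi.mul_apply, gaussianPDF, gaussianPDF, ← ENNReal.ofReal_mul (gaussianPDFReal_nonneg _ _ _),
    gaussianPDFReal, gaussianPDFReal, mul_assoc _ (Real.exp _), ← Real.exp_add]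
  have : (v : ℝ) ≠ 0 := by exact_mod_cast hv
  congr 3
  field_simp
  ring

lemma neyman_pearson {α : Type*} [MeasurableSpace α] (μ : Measure α) [IsFiniteMeasure μ]
    {F : α → ℝ≥0∞} (hF : Measurable F) {A H : Set α} (hA : MeasurableSet A)
    (hH : MeasurableSet H) {r : ℝ≥0∞} (hlt : ∀ z ∉ H, F z ≤ r) (hge : ∀ z ∈ H, r ≤ F z)
    (hμ : μ A ≤ μ H) :
    μ.withDensity F A ≤ μ.withDensity F H := by
  set ν := μ.withDensity F
  have hdiff : μ (A \ H) ≤ μ (H \ A) := by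
    rw [← measure_inter_add_sdiff A hH, ← measure_inter_add_sdiff H hA, inter_comm H A] at hμ
    exact (ENNReal.add_le_add_iff_left (measure_ne_top μ _)).1 hμ
  have hAH : ν (A \ H) ≤ r * μ (A \ H) := by
    rw [withDensity_apply _ (hA.diff hH), ← setLIntegral_const]
    exact setLIntegral_mono measurable_const fun z hz ↦ hlt z hz.2
  have hHA : r * μ (H \ A) ≤ ν (H \ A) := by
    rw [withDensity_apply _ (hH.diff hA), ← setLIntegral_const]
    exact setLIntegral_mono hF fun z hz ↦ hge z hz.1
  calc ν A = ν (A ∩ H) + ν (A \ H) := (measure_inter_add_sdiff A hH).symm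
    _ ≤ ν (A ∩ H) + ν (H \ A) :=
      add_le_add_right (hAH.trans ((mul_le_mul_right hdiff r).trans hHA)) _
    _ = ν (H ∩ A) + ν (H \ A) := by rw [inter_comm]
    _ = ν H := measure_inter_add_sdiff H hA

lemma l2norm_pos {d : ℕ} {w : Fin d → ℝ} (hw : w ≠ 0) : 0 < l2norm w := by
  obtain ⟨i, hi⟩ := Function.ne_iff.1 hw
  replace hi : w i ≠ 0 := hi
  exact Real.sqrt_pos.2
    (Finset.sum_pos' (fun _ _ ↦ sq_nonneg _) ⟨i, Finset.mem_univ i, by positivity⟩)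

lemma l2norm_sq {d : ℕ} (w : Fin d → ℝ) : l2norm w ^ 2 = ∑ i, w i ^ 2 :=
  Real.sq_sqrt (Finset.sum_nonneg fun _ _ ↦ sq_nonneg _)

@[fun_prop]
lemma measurable_dotp {d : ℕ} (w : Fin d → ℝ) : Measurable (dotp w) :=
  Finset.measurable_sum _ fun i _ ↦ (measurable_pi_apply i).const_mul _

lemma dotp_add {d : ℕ} (w x y : Fin d → ℝ) : dotp w (x + y) = dotp w x + dotp w y := by
  simp only [dotp, Pi.add_apply, mul_add, Finset.sum_add_distrib]

lemma dotp_self {d : ℕ} (w : Fin d → ℝ) : dotp w w = l2norm w ^ 2 := by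
  rw [dotp, l2norm_sq]
  simp only [sq]

instance {d : ℕ} (m : Fin d → ℝ) (σ : ℝ) : IsProbabilityMeasure (gaussianVec m σ) := by
  unfold gaussianVec; infer_instance

lemma gaussianVec_map_dotp {d : ℕ} (m : Fin d → ℝ) (σ : ℝ) (w : Fin d → ℝ) :
    (gaussianVec m σ).map (dotp w) = gaussianReal (dotp w m) ((σ * l2norm w) ^ 2).toNNReal := by
  rw [gaussianVec, show dotp w = fun z ↦ ∑ i, w i * z i from rfl, map_pi_gaussianReal_sum_mul]
  congr 1
  ext
  rw [NNReal.coe_sum, Real.coe_toNNReal _ (sq_nonneg _), mul_pow, l2norm_sq, Finset.mul_sum]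
  refine Finset.sum_congr rfl fun i _ ↦ ?_
  rw [NNReal.coe_mul, Real.coe_toNNReal _ (sq_nonneg _), Real.coe_toNNReal _ (sq_nonneg _),
    mul_comm]

lemma gaussianVec_setOf_le_dotp {d : ℕ} (m : Fin d → ℝ) {σ : ℝ} (hσ : 0 < σ)
    {w : Fin d → ℝ} (hw : w ≠ 0) (τ : ℝ) :
    gaussianVec m σ {z | τ ≤ dotp w z}
      = ENNReal.ofReal (Phi ((dotp w m - τ) / (σ * l2norm w))) := by
  rw [← gaussianReal_Ici _ (mul_pos hσ (l2norm_pos hw)), ← gaussianVec_map_dotp,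
    Measure.map_apply (measurable_dotp w) measurableSet_Ici]
  rfl

lemma gaussianVec_add_eq_withDensity {d : ℕ} (x δ : Fin d → ℝ) {σ : ℝ} (hσ : σ ≠ 0) :
    gaussianVec (x + δ) σ = (gaussianVec x σ).withDensity
      fun z ↦ ENNReal.ofReal
        (Real.exp ((dotp δ z - dotp δ x - l2norm δ ^ 2 / 2) / σ ^ 2)) := by
  have hv : (σ ^ 2).toNNReal ≠ 0 := (Real.toNNReal_pos.2 (by positivity)).ne'
  have hdens (i : Fin d) := gaussianReal_add_eq_withDensity (x i) (δ i) hv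
  have : ∀ i, SigmaFinite ((gaussianReal (x i) (σ ^ 2).toNNReal).withDensity
      fun y ↦ ENNReal.ofReal
        (Real.exp ((δ i * (y - x i) - δ i ^ 2 / 2) / (σ ^ 2).toNNReal))) :=
    fun i ↦ hdens i ▸ inferInstance
  simp only [gaussianVec, Pi.add_apply, hdens]
  rw [Measure.pi_withDensity _ fun i ↦ by fun_prop]
  congr 1
  ext z
  rw [← ENNReal.ofReal_prod_of_nonneg fun i _ ↦ (Real.exp_pos _).le, ← Real.exp_sum,
    Real.coe_toNNReal _ (sq_nonneg σ), ← Finset.sum_div, l2norm_sq, dotp, dotp]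
  simp only [mul_sub, Finset.sum_sub_distrib, Finset.sum_div]

theorem gaussianVec_add_measureReal_le {d : ℕ} (x δ : Fin d → ℝ) (hδ : δ ≠ 0) {σ : ℝ}
    (hσ : 0 < σ) {A : Set (Fin d → ℝ)} (hA : MeasurableSet A) {p : ℝ} (hp : p ∈ Ioo 0 1)
    (hμA : (gaussianVec x σ).real A ≤ p) :
    (gaussianVec (x + δ) σ).real A ≤ Phi (PhiInv p + l2norm δ / σ) := by
  have hn : l2norm δ ≠ 0 := (l2norm_pos hδ).ne'
  have hs : σ * l2norm δ ≠ 0 := mul_ne_zero hσ.ne' hn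
  set τ := dotp δ x - σ * l2norm δ * PhiInv p
  set H := {z | τ ≤ dotp δ z}
  have hH : MeasurableSet H := measurableSet_le measurable_const (measurable_dotp δ)
  have hμH : gaussianVec x σ H = ENNReal.ofReal p := by
    rw [gaussianVec_setOf_le_dotp x hσ hδ,
      show dotp δ x - τ = σ * l2norm δ * PhiInv p by ring, mul_div_cancel_left₀ _ hs,
      Phi_PhiInv hp]
  have hνH : gaussianVec (x + δ) σ H = ENNReal.ofReal (Phi (PhiInv p + l2norm δ / σ)) := by
    rw [gaussianVec_setOf_le_dotp _ hσ hδ, dotp_add, dotp_self]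
    congr 3
    simp only [τ]
    field_simp
    ring
  have hNP : gaussianVec (x + δ) σ A ≤ gaussianVec (x + δ) σ H := by
    rw [gaussianVec_add_eq_withDensity x δ hσ.ne']
    refine neyman_pearson _ (by fun_prop) hA hH
      (r := ENNReal.ofReal (Real.exp ((τ - dotp δ x - l2norm δ ^ 2 / 2) / σ ^ 2)))
      (fun z hz ↦ ?_) (fun z hz ↦ ?_) ?_
    · have : dotp δ z ≤ τ := (not_le.1 hz).le
      gcongr
    · have : τ ≤ dotp δ z := hz
      gcongr
    · rw [← ofReal_measureReal, hμH]
      exact ENNReal.ofReal_le_ofReal hμA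
  calc (gaussianVec (x + δ) σ).real A ≤ (gaussianVec (x + δ) σ H).toReal :=
        ENNReal.toReal_mono (measure_ne_top _ _) hNP
    _ = Phi (PhiInv p + l2norm δ / σ) := by
      rw [hνH]; exact ENNReal.toReal_ofReal ENNReal.toReal_nonneg

lemma measureReal_biUnion_preimage_singleton {α β ι : Type*} [MeasurableSpace α]
    [MeasurableSpace β] [MeasurableSingletonClass β] (μ : Measure α) [IsFiniteMeasure μ] {f : α → β}
    (hf : Measurable f) {b : ι → β} (hb : Function.Injective b) (s : Finset ι) :
    μ.real (⋃ j ∈ s, f ⁻¹' {b j}) = ∑ j ∈ s, μ.real (f ⁻¹' {b j}) :=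
  measureReal_biUnion_finset
    (fun _ _ _ _ hij ↦ (disjoint_singleton.2 (hb.ne hij)).preimage f)
    fun _ _ ↦ hf (measurableSet_singleton _)

theorem min_label_prob_bound_general
    {d c : ℕ}
    (σ : ℝ) (hσ : 0 < σ) (x : Fin d → ℝ)
    (f : (Fin d → ℝ) → Fin c) (hf : Measurable f)
    (k : ℕ) (hk : 1 ≤ k) (b : Fin k → Fin c) (hbinj : Function.Injective b)
    (pbar : Fin k → ℝ)
    (hub : ∀ j, (gaussianVec x σ {z | f z = b j}).toReal ≤ pbar j)
    (pS : Fin k → ℝ)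
    (hpS : ∀ t, pS t = ∑ j ∈ Finset.univ.filter (fun j => j ≤ t), pbar j)
    (hpS01 : ∀ t, pS t ∈ Set.Ioo (0 : ℝ) 1)
    (δ : Fin d → ℝ) (hδ : δ ≠ 0) :
    (⨅ j : Fin k, (gaussianVec (x + δ) σ {z | f z = b j}).toReal) ≤
      ⨅ t : Fin k, Phi (PhiInv (pS t) + l2norm δ / σ) / ((t : ℕ) + 1) := by
  have : Nonempty (Fin k) := ⟨⟨0, hk⟩⟩
  refine le_ciInf fun t ↦ ?_
  set A := ⋃ j ∈ Finset.Iic t, f ⁻¹' {b j}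
  have hA : MeasurableSet A :=
    Finset.measurableSet_biUnion _ fun j _ ↦ hf (measurableSet_singleton _)
  have hμA : (gaussianVec x σ).real A ≤ pS t := by
    rw [measureReal_biUnion_preimage_singleton _ hf hbinj, hpS, Finset.filter_ge_eq_Iic]
    exact Finset.sum_le_sum fun j _ ↦ hub j
  set m := ⨅ j, (gaussianVec (x + δ) σ {z | f z = b j}).toReal
  have hmin : ((t : ℕ) + 1 : ℝ) * m ≤ (gaussianVec (x + δ) σ).real A := by
    calc ((t : ℕ) + 1 : ℝ) * m = (Finset.Iic t).card • m := by
          rw [Fin.card_Iic, nsmul_eq_mul, Nat.cast_succ]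
      _ ≤ _ := Finset.card_nsmul_le_sum _ _ _ fun j _ ↦ ciInf_le (finite_range _).bddBelow j
      _ = _ := (measureReal_biUnion_preimage_singleton _ hf hbinj _).symm
  rw [le_div_iff₀ (by positivity), mul_comm]
  exact hmin.trans (gaussianVec_add_measureReal_le x δ hδ hσ hA (hpS01 t) hμA)

/-- Bound on the smallest of the k probabilities: if Γ = {b₀,…,b_{k-1}} are k
distinct labels with Pr(f(X) = b_j) ≤ p̄_{b_j} (sorted increasingly) and
p̄_{S_t} = Σ_{j≤t} p̄_{b_j} ∈ (0,1), then for every δ ≠ 0,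
min_{i∈Γ} Pr(f(Y)=i) ≤ min_{1≤t≤k} Φ(Φ⁻¹(p̄_{S_t}) + ‖δ‖₂/σ)/t. -/
theorem min_label_prob_bound
    {d c : ℕ} (hd : 1 ≤ d) (hc : 2 ≤ c)
    (σ : ℝ) (hσ : 0 < σ) (x : Fin d → ℝ)
    (f : (Fin d → ℝ) → Fin c) (hf : Measurable f)
    (k : ℕ) (hk : 1 ≤ k) (b : Fin k → Fin c) (hbinj : Function.Injective b)
    (pbar : Fin k → ℝ) (hmono : Monotone pbar)
    (hub : ∀ j, (gaussianVec x σ {z | f z = b j}).toReal ≤ pbar j)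
    (pS : Fin k → ℝ)
    (hpS : ∀ t, pS t = ∑ j ∈ Finset.univ.filter (fun j => j ≤ t), pbar j)
    (hpS01 : ∀ t, pS t ∈ Set.Ioo (0 : ℝ) 1)
    (δ : Fin d → ℝ) (hδ : δ ≠ 0) :
    (⨅ j : Fin k, (gaussianVec (x + δ) σ {z | f z = b j}).toReal) ≤
      ⨅ t : Fin k, Phi (PhiInv (pS t) + l2norm δ / σ) / ((t : ℕ) + 1) :=
  min_label_prob_bound_general σ hσ x f hf k hk b hbinj pbar hub pS hpS hpS01 δ hδ
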